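/- There exists a constant C̃ > 0, depending only on T, p, C_{ℓ,1}, C_{ℓ,2}, C_{ℓ,3}, C_{g,1}, C_{g,2} and C_A := max( sup_{t∈[0,T]} |A(t,0)| , L_A ), such that for every t ∈ [0,T] and x ∈ ℝ^d, every optimal control α* ∈ L^p([t,T];ℝ^r) (i.e. one with J^{t,x}(α*) = v(t,x)) satisfies ( ∫_t^T |α*(s)|^p ds )^{1/p} ≤ C̃ (1 + |x|). -/

import Mathlib

open MeasureTheory Set intervalIntegral Filter

noncomputable section

/-- `γ` is the trajectory on `[t,T]` driven by the control `α`, starting from `x` at time `t`. -/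
def IsTrajectory (d r : ℕ) (T : ℝ) (A : ℝ → (Fin d → ℝ) → (Fin d → ℝ))
    (B : ℝ → ((Fin r → ℝ) →L[ℝ] (Fin d → ℝ)))
    (t : ℝ) (x : Fin d → ℝ) (α : ℝ → (Fin r → ℝ)) (γ : ℝ → (Fin d → ℝ)) : Prop :=
  ContinuousOn γ (Set.Icc t T) ∧
    ∀ s ∈ Set.Icc t T, γ s = x + ∫ u in t..s, (A u (γ u) + B u (α u))

/-- `α` is an admissible control on `[t,T]`: measurable with `∫_t^T |α(s)|^p ds < ∞`. -/
def IsControl (r : ℕ) (p T t : ℝ) (α : ℝ → (Fin r → ℝ)) : Prop :=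
  Measurable α ∧ IntegrableOn (fun s => ‖α s‖ ^ p) (Set.Icc t T)

/-- The set of costs `J^{t,x}(α)` achievable by admissible controls from `(t,x)`. -/
def CostSet (d r : ℕ) (T p : ℝ) (A : ℝ → (Fin d → ℝ) → (Fin d → ℝ))
    (B : ℝ → ((Fin r → ℝ) →L[ℝ] (Fin d → ℝ)))
    (ℓ : ℝ → (Fin r → ℝ) → (Fin d → ℝ) → ℝ) (g : (Fin d → ℝ) → ℝ)
    (t : ℝ) (x : Fin d → ℝ) : Set ℝ :=
  {c | ∃ (α : ℝ → (Fin r → ℝ)) (γ : ℝ → (Fin d → ℝ)),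
      IsControl r p T t α ∧ IsTrajectory d r T A B t x α γ ∧
      c = (∫ s in t..T, ℓ s (α s) (γ s)) + g (γ T)}

/-- The value function `v(t,x) = inf { J^{t,x}(α) : α ∈ L^p([t,T];ℝ^r) }`. -/
def value (d r : ℕ) (T p : ℝ) (A : ℝ → (Fin d → ℝ) → (Fin d → ℝ))
    (B : ℝ → ((Fin r → ℝ) →L[ℝ] (Fin d → ℝ)))
    (ℓ : ℝ → (Fin r → ℝ) → (Fin d → ℝ) → ℝ) (g : (Fin d → ℝ) → ℝ)
    (t : ℝ) (x : Fin d → ℝ) : ℝ :=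
  sInf (CostSet d r T p A B ℓ g t x)

/-!
An optimal control costs no more than the zero control. The uncontrolled trajectory exists on
`[t, T]` (Picard–Lindelöf on steps of a fixed length, glued together) and by Grönwall grows at most
linearly in `‖x‖`, so the growth bounds on `ℓ` and `g` make the zero control cost
`O((1 + ‖x‖)^p)`. On the other hand coercivity, `ℓ ≥ C_{ℓ,1}‖a‖^p - C_{ℓ,2}` and `g ≥ -C_{g,1}`,
bounds the cost of any control below by `C_{ℓ,1} ∫ ‖α‖^p` minus a constant.
-/

open scoped NNReal

section ODE

variable {E : Type*} [NormedAddCommGroup E] [NormedSpace ℝ E] {f : ℝ → E → E}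

theorem IsIntegralCurveOn.piecewise_Icc {γ₁ γ₂ : ℝ → E} {a b c : ℝ}
    (h₁ : IsIntegralCurveOn γ₁ f (Icc a b)) (h₂ : IsIntegralCurveOn γ₂ f (Icc b c))
    (hb : γ₁ b = γ₂ b) :
    IsIntegralCurveOn (fun s => if s ≤ b then γ₁ s else γ₂ s) f (Icc a c) := by
  set γ := fun s => if s ≤ b then γ₁ s else γ₂ s
  have eq₁ : EqOn γ γ₁ (Icc a b) := fun s hs => if_pos hs.2
  have eq₂ : EqOn γ γ₂ (Icc b c) := fun s hs => by
    rcases hs.1.eq_or_lt with rfl | hlt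
    · exact (if_pos le_rfl).trans hb
    · exact if_neg hlt.not_ge
  intro s hs
  refine HasDerivWithinAt.mono ?_ (Icc_subset_Icc_union_Icc (b := b))
  refine HasDerivWithinAt.union ?_ ?_
  · by_cases hsb : s ≤ b
    · have hs₁ : s ∈ Icc a b := ⟨hs.1, hsb⟩
      simpa only [eq₁ hs₁] using (h₁ s hs₁).congr eq₁ (eq₁ hs₁)
    · exact HasFDerivWithinAt.of_notMem_closure (by simpa [closure_Icc] using fun _ => hsb)
  · by_cases hbs : b ≤ s
    · have hs₂ : s ∈ Icc b c := ⟨hbs, hs.2⟩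
      simpa only [eq₂ hs₂] using (h₂ s hs₂).congr eq₂ (eq₂ hs₂)
    · exact HasFDerivWithinAt.of_notMem_closure (by simp [closure_Icc, hbs])

theorem exists_isIntegralCurveOn_Icc_of_lipschitzWith_of_mul_le_one [CompleteSpace E]
    {a b C : ℝ} {K : ℝ≥0} (hab : a ≤ b)
    (hcont : ∀ x, ContinuousOn (f · x) (Icc a b))
    (hlip : ∀ t ∈ Icc a b, LipschitzWith K (f t)) (hC : ∀ t ∈ Icc a b, ‖f t 0‖ ≤ C)
    (hlen : (C + 2 * K) * (b - a) ≤ 1) (x₀ : E) :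
    ∃ γ : ℝ → E, γ a = x₀ ∧ IsIntegralCurveOn γ f (Icc a b) := by
  have hC₀ : 0 ≤ C := (norm_nonneg _).trans (hC a ⟨le_rfl, hab⟩)
  -- Picard–Lindelöf on the ball of radius `1 + ‖x₀‖`, where `‖f‖ ≤ (C + 2K) (1 + ‖x₀‖)`.
  set ρ : ℝ≥0 := ⟨1 + ‖x₀‖, by positivity⟩
  set M : ℝ≥0 := ⟨(C + 2 * K) * (1 + ‖x₀‖), by positivity⟩
  have hρ : (ρ : ℝ) = 1 + ‖x₀‖ := rfl
  have hM : (M : ℝ) = (C + 2 * K) * (1 + ‖x₀‖) := rfl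
  have hPL : IsPicardLindelof f (⟨a, le_rfl, hab⟩ : Icc a b) x₀ ρ 0 M K := by
    refine ⟨fun t ht => (hlip t ht).lipschitzOnWith, fun x _ => hcont x, ?_, ?_⟩
    · intro t ht x hx
      have hx : ‖x‖ ≤ 1 + 2 * ‖x₀‖ := by
        have := norm_le_norm_add_norm_sub' x x₀
        have := mem_closedBall_iff_norm.mp hx
        rw [hρ] at this
        linarith
      calc ‖f t x‖ ≤ ‖f t 0‖ + ‖f t x - f t 0‖ := norm_le_norm_add_norm_sub' _ _
        _ ≤ C + K * ‖x‖ := by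
          gcongr
          · exact hC t ht
          · simpa using (hlip t ht).norm_sub_le x 0
        _ ≤ M := by
          rw [hM]
          nlinarith [K.coe_nonneg, norm_nonneg x₀]
    · rw [hM, hρ, NNReal.coe_zero, sub_zero, sub_self, max_eq_left (sub_nonneg.2 hab)]
      calc (C + 2 * K) * (1 + ‖x₀‖) * (b - a) = (C + 2 * K) * (b - a) * (1 + ‖x₀‖) := by ring
        _ ≤ 1 * (1 + ‖x₀‖) := by gcongr
        _ = 1 + ‖x₀‖ := one_mul _
  exact hPL.exists_eq_forall_mem_Icc_hasDerivWithinAt₀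

theorem exists_isIntegralCurveOn_Icc_of_lipschitzWith [CompleteSpace E] {a b : ℝ} {K : ℝ≥0}
    (hab : a ≤ b) (hcont : ∀ x, ContinuousOn (f · x) (Icc a b))
    (hlip : ∀ t ∈ Icc a b, LipschitzWith K (f t)) (x₀ : E) :
    ∃ γ : ℝ → E, γ a = x₀ ∧ IsIntegralCurveOn γ f (Icc a b) := by
  obtain ⟨C, hC⟩ := isCompact_Icc.exists_bound_of_continuousOn (hcont 0)
  have hCK : 0 ≤ C + 2 * K := by
    linarith [(norm_nonneg _).trans (hC a ⟨le_rfl, hab⟩), K.coe_nonneg]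
  set h := (C + 2 * K + 1)⁻¹
  have hh : 0 < h := by positivity
  have step : ∀ t₀ t₁, a ≤ t₀ → t₁ ≤ b → t₀ ≤ t₁ → t₁ ≤ t₀ + h → ∀ x₀ : E,
      ∃ γ : ℝ → E, γ t₀ = x₀ ∧ IsIntegralCurveOn γ f (Icc t₀ t₁) := by
    intro t₀ t₁ ha hb h01 h1 x₀
    have hsub : Icc t₀ t₁ ⊆ Icc a b := Icc_subset_Icc ha hb
    refine exists_isIntegralCurveOn_Icc_of_lipschitzWith_of_mul_le_one h01
      (fun x => (hcont x).mono hsub) (fun t ht => hlip t (hsub ht)) (fun t ht => hC t (hsub ht))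
      ?_ x₀
    calc (C + 2 * K) * (t₁ - t₀) ≤ (C + 2 * K + 1) * h :=
          mul_le_mul (by linarith) (by linarith) (by linarith) (by linarith)
      _ = 1 := mul_inv_cancel₀ (by positivity)
  have key : ∀ n : ℕ, ∀ t₀ ∈ Icc a b, b - t₀ ≤ n * h → ∀ x₀ : E,
      ∃ γ : ℝ → E, γ t₀ = x₀ ∧ IsIntegralCurveOn γ f (Icc t₀ b) := by
    intro n
    induction n with
    | zero => exact fun t₀ ht₀ hn => step t₀ b ht₀.1 le_rfl ht₀.2 (by simp at hn; linarith)
    | succ n ih =>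
      intro t₀ ht₀ hn x₀
      rcases le_or_gt b (t₀ + h) with hb | hb
      · exact step t₀ b ht₀.1 le_rfl ht₀.2 hb x₀
      obtain ⟨γ₁, hγ₁, hγ₁f⟩ := step t₀ (t₀ + h) ht₀.1 hb.le (by linarith) le_rfl x₀
      obtain ⟨γ₂, hγ₂, hγ₂f⟩ := ih (t₀ + h) ⟨by linarith [ht₀.1], hb.le⟩
        (by push_cast at hn; linarith) (γ₁ (t₀ + h))
      exact ⟨_, by simp [hh.le, hγ₁], hγ₁f.piecewise_Icc hγ₂f hγ₂.symm⟩
  refine key ⌈(b - a) / h⌉₊ a ⟨le_rfl, hab⟩ ?_ x₀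
  rw [← div_le_iff₀ hh]
  exact Nat.le_ceil _

theorem IsIntegralCurveOn.norm_le_of_norm_le_mul_add {γ : ℝ → E} {a b K C : ℝ} (hK : 0 < K)
    (hγ : IsIntegralCurveOn γ f (Icc a b)) (hf : ∀ t ∈ Icc a b, ∀ x, ‖f t x‖ ≤ K * ‖x‖ + C) :
    ∀ t ∈ Icc a b, ‖γ t‖ ≤ (‖γ a‖ + C / K) * Real.exp (K * (t - a)) := by
  intro t ht
  have hright : ∀ s ∈ Ico a b, HasDerivWithinAt γ (f s (γ s)) (Ici s) s := fun s hs =>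
    (hγ s (Ico_subset_Icc_self hs)).mono_of_mem_nhdsWithin
      (mem_of_superset (Icc_mem_nhdsGE hs.2) (Icc_subset_Icc_left hs.1))
  have hgr := norm_le_gronwallBound_of_norm_deriv_right_le hγ.continuousOn hright le_rfl
    (fun s hs => hf s (Ico_subset_Icc_self hs) (γ s)) t ht
  rw [gronwallBound_of_K_ne_0 hK.ne'] at hgr
  have hC : 0 ≤ C := by simpa using (norm_nonneg _).trans (hf a ⟨le_rfl, ht.1.trans ht.2⟩ 0)
  have : 0 ≤ C / K := by positivity
  linarith

theorem IsIntegralCurveOn.eq_add_integral [CompleteSpace E] {γ : ℝ → E} {a b : ℝ}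
    (hγ : IsIntegralCurveOn γ f (Icc a b))
    (hf : ContinuousOn (Function.uncurry f) (Icc a b ×ˢ univ)) :
    ∀ s ∈ Icc a b, γ s = γ a + ∫ u in a..s, f u (γ u) := by
  intro s hs
  have hsub : uIcc a s ⊆ Icc a b := by
    rw [uIcc_of_le hs.1]; exact Icc_subset_Icc_right hs.2
  exact (ODE.picard_eq_of_hasDerivAt (hf.mono (prod_mono hsub subset_rfl))
    (fun u hu => (hγ u (hsub hu)).mono hsub) (mapsTo_univ _ _)).symm

end ODE

theorem exists_isTrajectory_zero_norm_le {d r : ℕ} {T LA : ℝ} (hT : 0 ≤ T)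
    {A : ℝ → (Fin d → ℝ) → (Fin d → ℝ)} (B : ℝ → ((Fin r → ℝ) →L[ℝ] (Fin d → ℝ)))
    (hAcont : ContinuousOn (fun q : ℝ × (Fin d → ℝ) => A q.1 q.2) (Icc 0 T ×ˢ univ))
    (hLA : 0 < LA) (hALip : ∀ t ∈ Icc 0 T, ∀ x y : Fin d → ℝ, ‖A t x - A t y‖ ≤ LA * ‖x - y‖) :
    ∃ K₀ : ℝ, 0 ≤ K₀ ∧ ∀ t ∈ Icc 0 T, ∀ x : Fin d → ℝ, ∃ γ : ℝ → (Fin d → ℝ),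
      IsTrajectory d r T A B t x 0 γ ∧ ∀ s ∈ Icc t T, ‖γ s‖ ≤ K₀ * (1 + ‖x‖) := by
  have hAslice : ∀ y, ContinuousOn (A · y) (Icc 0 T) := fun y =>
    hAcont.comp (continuousOn_id.prodMk continuousOn_const) fun u hu => ⟨hu, mem_univ _⟩
  obtain ⟨C, hC⟩ := isCompact_Icc.exists_bound_of_continuousOn (hAslice 0)
  have hC₀ : 0 ≤ C := (norm_nonneg _).trans (hC 0 ⟨le_rfl, hT⟩)
  have hgrowth : ∀ s ∈ Icc 0 T, ∀ y, ‖A s y‖ ≤ LA * ‖y‖ + C := fun s hs y => by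
    have := hALip s hs y 0
    rw [sub_zero] at this
    linarith [norm_le_norm_add_norm_sub' (A s y) (A s 0), hC s hs]
  refine ⟨(1 + C / LA) * Real.exp (LA * T), by positivity, fun t ht x => ?_⟩
  have hsub : Icc t T ⊆ Icc 0 T := Icc_subset_Icc_left ht.1
  have hlip : ∀ s ∈ Icc t T, LipschitzWith LA.toNNReal (A s) := fun s hs =>
    LipschitzWith.of_dist_le_mul fun y z => by
      simpa [dist_eq_norm, Real.coe_toNNReal _ hLA.le] using hALip s (hsub hs) y z
  obtain ⟨γ, hγt, hγ⟩ := exists_isIntegralCurveOn_Icc_of_lipschitzWith (f := A) ht.2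
    (fun y => (hAslice y).mono hsub) hlip x
  refine ⟨γ, ?_, fun s hs => ?_⟩
  · unfold IsTrajectory
    refine ⟨hγ.continuousOn, fun s hs => ?_⟩
    simpa [hγt] using hγ.eq_add_integral (hAcont.mono (prod_mono hsub subset_rfl)) s hs
  · have := hγ.norm_le_of_norm_le_mul_add hLA (fun u hu => hgrowth u (hsub hu)) s hs
    rw [hγt] at this
    refine this.trans ?_
    have : Real.exp (LA * (s - t)) ≤ Real.exp (LA * T) := by
      gcongr; linarith [hs.2, ht.1]
    have : ‖x‖ + C / LA ≤ (1 + C / LA) * (1 + ‖x‖) := by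
      nlinarith [norm_nonneg x, div_nonneg hC₀ hLA.le]
    calc (‖x‖ + C / LA) * Real.exp (LA * (s - t))
        ≤ (1 + C / LA) * (1 + ‖x‖) * Real.exp (LA * T) := by gcongr
      _ = _ := by ring

section RunningCost

variable {E F : Type*} [NormedAddCommGroup F]
  {ℓ : ℝ → F → E → ℝ} {T t p : ℝ} {α : ℝ → F} {γ : ℝ → E}

theorem le_integral_running_cost {c₁ c₂ : ℝ} (ht : t ∈ Icc 0 T)
    (hlb : ∀ s ∈ Icc 0 T, ∀ a x, c₁ * ‖a‖ ^ p - c₂ ≤ ℓ s a x)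
    (hαp : IntegrableOn (fun s => ‖α s‖ ^ p) (Icc t T))
    (hℓ : IntegrableOn (fun s => ℓ s (α s) (γ s)) (Icc t T)) :
    c₁ * (∫ s in t..T, ‖α s‖ ^ p) - c₂ * (T - t) ≤ ∫ s in t..T, ℓ s (α s) (γ s) := by
  have hαp' := (intervalIntegrable_iff_integrableOn_Icc_of_le ht.2).2 hαp
  calc c₁ * (∫ s in t..T, ‖α s‖ ^ p) - c₂ * (T - t) = ∫ s in t..T, (c₁ * ‖α s‖ ^ p - c₂) := by
        rw [intervalIntegral.integral_sub (hαp'.const_mul c₁) intervalIntegrable_const,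
          intervalIntegral.integral_const_mul, intervalIntegral.integral_const, smul_eq_mul,
          mul_comm c₂]
    _ ≤ ∫ s in t..T, ℓ s (α s) (γ s) :=
        intervalIntegral.integral_mono_on ht.2 ((hαp'.const_mul c₁).sub intervalIntegrable_const)
          ((intervalIntegrable_iff_integrableOn_Icc_of_le ht.2).2 hℓ)
          fun s hs => hlb s ⟨ht.1.trans hs.1, hs.2⟩ _ _

variable [NormedAddCommGroup E]

theorem integral_running_cost_le {c₃ M : ℝ} (hp : 0 ≤ p) (hc₃ : 0 ≤ c₃) (ht : t ∈ Icc 0 T)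
    (hub : ∀ s ∈ Icc 0 T, ∀ a x, ℓ s a x ≤ c₃ * (1 + ‖a‖ ^ p + ‖x‖ ^ p))
    (hαp : IntegrableOn (fun s => ‖α s‖ ^ p) (Icc t T))
    (hℓ : IntegrableOn (fun s => ℓ s (α s) (γ s)) (Icc t T))
    (hM : ∀ s ∈ Icc t T, ‖γ s‖ ≤ M) :
    ∫ s in t..T, ℓ s (α s) (γ s) ≤ c₃ * ((∫ s in t..T, ‖α s‖ ^ p) + (T - t) * (1 + M ^ p)) := by
  have hαp' := (intervalIntegrable_iff_integrableOn_Icc_of_le ht.2).2 hαp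
  calc ∫ s in t..T, ℓ s (α s) (γ s) ≤ ∫ s in t..T, c₃ * (‖α s‖ ^ p + (1 + M ^ p)) :=
        intervalIntegral.integral_mono_on ht.2
          ((intervalIntegrable_iff_integrableOn_Icc_of_le ht.2).2 hℓ)
          ((hαp'.add intervalIntegrable_const).const_mul c₃) fun s hs => by
            have := Real.rpow_le_rpow (norm_nonneg _) (hM s hs) hp
            have := hub s ⟨ht.1.trans hs.1, hs.2⟩ (α s) (γ s)
            nlinarith
    _ = c₃ * ((∫ s in t..T, ‖α s‖ ^ p) + (T - t) * (1 + M ^ p)) := by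
        rw [intervalIntegral.integral_const_mul, intervalIntegral.integral_add hαp'
          intervalIntegrable_const, intervalIntegral.integral_const, smul_eq_mul]

section Measurability

variable [MeasurableSpace E] [BorelSpace E] [SecondCountableTopology E]
  [MeasurableSpace F] [BorelSpace F] [SecondCountableTopology F]

theorem aestronglyMeasurable_running_cost (ht : t ∈ Icc 0 T)
    (hℓ : ContinuousOn (fun q : ℝ × F × E => ℓ q.1 q.2.1 q.2.2) (Icc 0 T ×ˢ univ))
    (hα : Measurable α) (hγ : ContinuousOn γ (Icc t T)) :
    AEStronglyMeasurable (fun s => ℓ s (α s) (γ s)) (volume.restrict (Icc t T)) := by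
  have hT : 0 ≤ T := ht.1.trans ht.2
  -- Clamping time into `[0, T]` makes the running cost continuous on all of `ℝ × F × E`.
  have hclamp : Continuous fun q : ℝ × F × E => ℓ (projIcc 0 T hT q.1) q.2.1 q.2.2 :=
    hℓ.comp_continuous (f := fun q : ℝ × F × E => ((projIcc 0 T hT q.1 : ℝ), q.2))
      ((continuous_subtype_val.comp (continuous_projIcc.comp continuous_fst)).prodMk continuous_snd)
      fun q => ⟨Subtype.prop _, mem_univ _⟩
  refine (hclamp.measurable.comp_aemeasurable (measurable_id.aemeasurable.prodMk
    (hα.aemeasurable.prodMk (hγ.aemeasurable measurableSet_Icc)))).aestronglyMeasurable.congr ?_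
  filter_upwards [ae_restrict_mem measurableSet_Icc] with s hs
  simp [projIcc_of_mem hT ⟨ht.1.trans hs.1, hs.2⟩]

theorem integrableOn_running_cost {c₁ c₂ c₃ : ℝ}
    (hlb : ∀ s ∈ Icc 0 T, ∀ a x, c₁ * ‖a‖ ^ p - c₂ ≤ ℓ s a x)
    (hub : ∀ s ∈ Icc 0 T, ∀ a x, ℓ s a x ≤ c₃ * (1 + ‖a‖ ^ p + ‖x‖ ^ p))
    (hp : 0 ≤ p) (ht : t ∈ Icc 0 T)
    (hℓ : ContinuousOn (fun q : ℝ × F × E => ℓ q.1 q.2.1 q.2.2) (Icc 0 T ×ˢ univ))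
    (hα : Measurable α) (hαp : IntegrableOn (fun s => ‖α s‖ ^ p) (Icc t T))
    (hγ : ContinuousOn γ (Icc t T)) :
    IntegrableOn (fun s => ℓ s (α s) (γ s)) (Icc t T) := by
  have hγp : IntegrableOn (fun s => ‖γ s‖ ^ p) (Icc t T) :=
    (hγ.norm.rpow_const fun _ _ => Or.inr hp).integrableOn_Icc
  refine integrable_of_le_of_le (aestronglyMeasurable_running_cost ht hℓ hα hγ) ?_ ?_
    ((hαp.const_mul c₁).sub (integrable_const c₂))
    (((integrable_const 1).add hαp).add hγp |>.const_mul c₃) <;>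
  filter_upwards [ae_restrict_mem measurableSet_Icc] with s hs
  · exact hlb s ⟨ht.1.trans hs.1, hs.2⟩ _ _
  · exact hub s ⟨ht.1.trans hs.1, hs.2⟩ _ _

theorem le_cost {c₁ c₂ c₃ cg : ℝ} {g : E → ℝ}
    (hlb : ∀ s ∈ Icc 0 T, ∀ a x, c₁ * ‖a‖ ^ p - c₂ ≤ ℓ s a x)
    (hub : ∀ s ∈ Icc 0 T, ∀ a x, ℓ s a x ≤ c₃ * (1 + ‖a‖ ^ p + ‖x‖ ^ p))
    (hg : ∀ x, -cg ≤ g x) (hp : 0 ≤ p) (ht : t ∈ Icc 0 T)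
    (hℓ : ContinuousOn (fun q : ℝ × F × E => ℓ q.1 q.2.1 q.2.2) (Icc 0 T ×ˢ univ))
    (hα : Measurable α) (hαp : IntegrableOn (fun s => ‖α s‖ ^ p) (Icc t T))
    (hγ : ContinuousOn γ (Icc t T)) :
    c₁ * (∫ s in t..T, ‖α s‖ ^ p) - c₂ * (T - t) - cg ≤
      (∫ s in t..T, ℓ s (α s) (γ s)) + g (γ T) := by
  have := le_integral_running_cost ht hlb hαp (integrableOn_running_cost hlb hub hp ht hℓ hα hαp hγ)
  linarith [hg (γ T)]

theorem cost_zero_le {c₁ c₂ c₃ cg M : ℝ} {g : E → ℝ}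
    (hlb : ∀ s ∈ Icc 0 T, ∀ a x, c₁ * ‖a‖ ^ p - c₂ ≤ ℓ s a x)
    (hub : ∀ s ∈ Icc 0 T, ∀ a x, ℓ s a x ≤ c₃ * (1 + ‖a‖ ^ p + ‖x‖ ^ p))
    (hg : ∀ x, g x ≤ cg * (1 + ‖x‖ ^ p)) (hp : 0 < p) (hc₃ : 0 ≤ c₃) (hcg : 0 ≤ cg)
    (ht : t ∈ Icc 0 T)
    (hℓ : ContinuousOn (fun q : ℝ × F × E => ℓ q.1 q.2.1 q.2.2) (Icc 0 T ×ˢ univ))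
    (hγ : ContinuousOn γ (Icc t T)) (hM : ∀ s ∈ Icc t T, ‖γ s‖ ≤ M) :
    (∫ s in t..T, ℓ s 0 (γ s)) + g (γ T) ≤ (c₃ * (T - t) + cg) * (1 + M ^ p) := by
  have hzero : IntegrableOn (fun _ => ‖(0 : F)‖ ^ p) (Icc t T) := by
    simp [Real.zero_rpow hp.ne']
  have hint := integral_running_cost_le hp.le hc₃ ht hub hzero
    (integrableOn_running_cost hlb hub hp.le ht hℓ measurable_const hzero hγ) hM
  have hMp := Real.rpow_le_rpow (norm_nonneg _) (hM T ⟨ht.2, le_rfl⟩) hp.le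
  simp only [norm_zero, Real.zero_rpow hp.ne', intervalIntegral.integral_zero, zero_add] at hint
  nlinarith [hg (γ T), mul_le_mul_of_nonneg_left hMp hcg]

end Measurability

end RunningCost

theorem isControl_zero {r : ℕ} {p T t : ℝ} (hp : 0 < p) : IsControl r p T t 0 :=
  ⟨measurable_const, by simp [Real.zero_rpow hp.ne']⟩

theorem bddBelow_costSet {d r : ℕ} {T p t : ℝ} {A : ℝ → (Fin d → ℝ) → (Fin d → ℝ)}
    {B : ℝ → ((Fin r → ℝ) →L[ℝ] (Fin d → ℝ))} {ℓ : ℝ → (Fin r → ℝ) → (Fin d → ℝ) → ℝ}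
    {g : (Fin d → ℝ) → ℝ} {Cl1 Cl2 Cl3 Cg1 : ℝ} (hp : 0 ≤ p) (hCl1 : 0 ≤ Cl1) (ht : t ∈ Icc 0 T)
    (hℓcont : ContinuousOn (fun q : ℝ × (Fin r → ℝ) × (Fin d → ℝ) => ℓ q.1 q.2.1 q.2.2)
      (Icc 0 T ×ˢ univ))
    (hl_lb : ∀ s ∈ Icc 0 T, ∀ a x, Cl1 * ‖a‖ ^ p - Cl2 ≤ ℓ s a x)
    (hl_ub : ∀ s ∈ Icc 0 T, ∀ a x, ℓ s a x ≤ Cl3 * (1 + ‖a‖ ^ p + ‖x‖ ^ p))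
    (hg_lb : ∀ x, -Cg1 ≤ g x) (x : Fin d → ℝ) :
    BddBelow (CostSet d r T p A B ℓ g t x) := by
  refine ⟨-Cl2 * (T - t) - Cg1, ?_⟩
  rintro _ ⟨α, γ, hα, hγ, rfl⟩
  have hI : 0 ≤ ∫ s in t..T, ‖α s‖ ^ p :=
    intervalIntegral.integral_nonneg ht.2 fun _ _ => by positivity
  nlinarith [le_cost hl_lb hl_ub hg_lb hp ht hℓcont hα.1 hα.2 hγ.1]

theorem one_add_mul_rpow_le {K y p : ℝ} (hK : 0 ≤ K) (hy : 1 ≤ y) (hp : 0 ≤ p) :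
    1 + (K * y) ^ p ≤ (1 + K ^ p) * y ^ p := by
  rw [Real.mul_rpow hK (by linarith)]
  nlinarith [Real.one_le_rpow hy hp, Real.rpow_nonneg hK p]

theorem rpow_one_div_le_of_le_mul_rpow {I c y p : ℝ} (hp : 0 < p) (hI : 0 ≤ I) (hc : 0 ≤ c)
    (hy : 0 ≤ y) (h : I ≤ c * y ^ p) : I ^ (1 / p) ≤ c ^ (1 / p) * y := by
  calc I ^ (1 / p) ≤ (c * y ^ p) ^ (1 / p) := by gcongr
    _ = c ^ (1 / p) * y := by
      rw [Real.mul_rpow hc (by positivity), ← Real.rpow_mul hy, mul_one_div_cancel hp.ne',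
        Real.rpow_one]

theorem statement7_general
    (d r : ℕ)
    (T : ℝ) (hT : 0 < T) (p : ℝ) (hp : 1 < p)
    (A : ℝ → (Fin d → ℝ) → (Fin d → ℝ)) (B : ℝ → ((Fin r → ℝ) →L[ℝ] (Fin d → ℝ)))
    (hAcont : ContinuousOn (fun q : ℝ × (Fin d → ℝ) => A q.1 q.2) (Set.Icc 0 T ×ˢ Set.univ))
    (LA : ℝ) (hLA : 0 < LA)
    (hALip : ∀ t ∈ Set.Icc 0 T, ∀ x y : Fin d → ℝ, ‖A t x - A t y‖ ≤ LA * ‖x - y‖)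
    (ℓ : ℝ → (Fin r → ℝ) → (Fin d → ℝ) → ℝ) (g : (Fin d → ℝ) → ℝ)
    (hℓcont : ContinuousOn
      (fun q : ℝ × (Fin r → ℝ) × (Fin d → ℝ) => ℓ q.1 q.2.1 q.2.2)
      (Set.Icc 0 T ×ˢ (Set.univ : Set ((Fin r → ℝ) × (Fin d → ℝ)))))
    (Cl1 Cl2 Cl3 Cg1 Cg2 : ℝ)
    (hCl1 : 0 < Cl1) (hCl2 : 0 < Cl2) (hCl3 : 0 < Cl3)
    (hCg1 : 0 < Cg1) (hCg2 : 0 < Cg2)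
    (hl_lb : ∀ t ∈ Set.Icc 0 T, ∀ (a : Fin r → ℝ) (x : Fin d → ℝ),
      Cl1 * ‖a‖ ^ p - Cl2 ≤ ℓ t a x)
    (hl_ub : ∀ t ∈ Set.Icc 0 T, ∀ (a : Fin r → ℝ) (x : Fin d → ℝ),
      ℓ t a x ≤ Cl3 * (1 + ‖a‖ ^ p + ‖x‖ ^ p))
    (hg_lb : ∀ x : Fin d → ℝ, -Cg1 ≤ g x)
    (hg_ub : ∀ x : Fin d → ℝ, g x ≤ Cg2 * (1 + ‖x‖ ^ p)) :
    ∃ Ct : ℝ, 0 < Ct ∧ ∀ t ∈ Set.Icc 0 T, ∀ (x : Fin d → ℝ)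
      (α : ℝ → (Fin r → ℝ)) (γ : ℝ → (Fin d → ℝ)),
      IsControl r p T t α → IsTrajectory d r T A B t x α γ →
      (∫ s in t..T, ℓ s (α s) (γ s)) + g (γ T) = value d r T p A B ℓ g t x →
      (∫ s in t..T, ‖α s‖ ^ p) ^ (1 / p) ≤ Ct * (1 + ‖x‖) := by
  have hp0 : 0 < p := by linarith
  obtain ⟨K₀, hK₀, hzero⟩ := exists_isTrajectory_zero_norm_le (r := r) hT.le B hAcont hLA hALip
  set D := (T * Cl3 + Cg2) * (1 + K₀ ^ p) + Cl2 * T + Cg1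
  refine ⟨(D / Cl1) ^ (1 / p), by positivity, fun t ht x α γ hα hγ hopt => ?_⟩
  obtain ⟨γ₀, hγ₀, hγ₀M⟩ := hzero t ht x
  have hJ : (∫ s in t..T, ℓ s (α s) (γ s)) + g (γ T) ≤ (∫ s in t..T, ℓ s 0 (γ₀ s)) + g (γ₀ T) :=
    hopt ▸ csInf_le (bddBelow_costSet hp0.le hCl1.le ht hℓcont hl_lb hl_ub hg_lb x)
      ⟨0, γ₀, isControl_zero hp0, hγ₀, rfl⟩
  have hlow := le_cost hl_lb hl_ub hg_lb hp0.le ht hℓcont hα.1 hα.2 hγ.1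
  have hup := cost_zero_le hl_lb hl_ub hg_ub hp0 hCl3.le hCg2.le ht hℓcont hγ₀.1 hγ₀M
  have hgrowth := one_add_mul_rpow_le hK₀ (le_add_of_nonneg_right (norm_nonneg x)) hp0.le
  have hy : 1 ≤ (1 + ‖x‖) ^ p := Real.one_le_rpow (by linarith [norm_nonneg x]) hp0.le
  have hI : 0 ≤ ∫ s in t..T, ‖α s‖ ^ p :=
    intervalIntegral.integral_nonneg ht.2 fun _ _ => by positivity
  refine rpow_one_div_le_of_le_mul_rpow hp0 hI (by positivity) (by positivity) ?_
  rw [div_mul_eq_mul_div, le_div_iff₀ hCl1]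
  calc (∫ s in t..T, ‖α s‖ ^ p) * Cl1
      ≤ (Cl3 * (T - t) + Cg2) * (1 + (K₀ * (1 + ‖x‖)) ^ p) + (Cl2 * (T - t) + Cg1) := by
        linarith
    _ ≤ (Cl3 * T + Cg2) * ((1 + K₀ ^ p) * (1 + ‖x‖) ^ p) + (Cl2 * T + Cg1) * (1 + ‖x‖) ^ p := by
        gcongr ?_ * ?_ + ?_
        · nlinarith [mul_nonneg hCl3.le ht.1]
        · nlinarith [mul_nonneg hCl2.le ht.1, mul_nonneg hCl2.le hT.le]
    _ = D * (1 + ‖x‖) ^ p := by ring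

/-- there is `C̃ > 0` (independent of `t` and `x`) such that every optimal
control satisfies `‖α*‖_{L^p(t,T)} ≤ C̃ (1 + |x|)`. -/
theorem statement7
    (d r : ℕ) (hd : 1 ≤ d) (hr : 1 ≤ r)
    (T : ℝ) (hT : 0 < T) (p : ℝ) (hp : 1 < p)
    (A : ℝ → (Fin d → ℝ) → (Fin d → ℝ)) (B : ℝ → ((Fin r → ℝ) →L[ℝ] (Fin d → ℝ)))
    (hAcont : ContinuousOn (fun q : ℝ × (Fin d → ℝ) => A q.1 q.2) (Set.Icc 0 T ×ˢ Set.univ))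
    (LA : ℝ) (hLA : 0 < LA)
    (hALip : ∀ t ∈ Set.Icc 0 T, ∀ x y : Fin d → ℝ, ‖A t x - A t y‖ ≤ LA * ‖x - y‖)
    (hBcont : ContinuousOn B (Set.Icc 0 T))
    (ℓ : ℝ → (Fin r → ℝ) → (Fin d → ℝ) → ℝ) (g : (Fin d → ℝ) → ℝ)
    (hℓcont : ContinuousOn
      (fun q : ℝ × (Fin r → ℝ) × (Fin d → ℝ) => ℓ q.1 q.2.1 q.2.2)
      (Set.Icc 0 T ×ˢ (Set.univ : Set ((Fin r → ℝ) × (Fin d → ℝ)))))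
    (hgcont : Continuous g)
    (Cl1 Cl2 Cl3 Cl4 Cg1 Cg2 Cg3 : ℝ)
    (hCl1 : 0 < Cl1) (hCl2 : 0 < Cl2) (hCl3 : 0 < Cl3) (hCl4 : 0 < Cl4)
    (hCg1 : 0 < Cg1) (hCg2 : 0 < Cg2) (hCg3 : 0 < Cg3)
    (hl_lb : ∀ t ∈ Set.Icc 0 T, ∀ (a : Fin r → ℝ) (x : Fin d → ℝ),
      Cl1 * ‖a‖ ^ p - Cl2 ≤ ℓ t a x)
    (hl_ub : ∀ t ∈ Set.Icc 0 T, ∀ (a : Fin r → ℝ) (x : Fin d → ℝ),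
      ℓ t a x ≤ Cl3 * (1 + ‖a‖ ^ p + ‖x‖ ^ p))
    (hl_lip : ∀ t ∈ Set.Icc 0 T, ∀ (a : Fin r → ℝ) (x y : Fin d → ℝ),
      |ℓ t a x - ℓ t a y| ≤ Cl4 * (1 + ‖x‖ ^ (p - 1) + ‖y‖ ^ (p - 1) + ‖a‖ ^ (p - 1)) * ‖x - y‖)
    (hg_lb : ∀ x : Fin d → ℝ, -Cg1 ≤ g x)
    (hg_ub : ∀ x : Fin d → ℝ, g x ≤ Cg2 * (1 + ‖x‖ ^ p))
    (hg_lip : ∀ x y : Fin d → ℝ, |g x - g y| ≤ Cg3 * (1 + ‖x‖ ^ (p - 1) + ‖y‖ ^ (p - 1)) * ‖x - y‖) :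
    ∃ Ct : ℝ, 0 < Ct ∧ ∀ t ∈ Set.Icc 0 T, ∀ (x : Fin d → ℝ)
      (α : ℝ → (Fin r → ℝ)) (γ : ℝ → (Fin d → ℝ)),
      IsControl r p T t α → IsTrajectory d r T A B t x α γ →
      (∫ s in t..T, ℓ s (α s) (γ s)) + g (γ T) = value d r T p A B ℓ g t x →
      (∫ s in t..T, ‖α s‖ ^ p) ^ (1 / p) ≤ Ct * (1 + ‖x‖) :=
  statement7_general d r T hT p hp A B hAcont LA hLA hALip ℓ g hℓcont Cl1 Cl2 Cl3 Cg1 Cg2 hCl1 hCl2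
    hCl3 hCg1 hCg2 hl_lb hl_ub hg_lb hg_ub
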